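/- Energy-derivative identity (intermediate step in the proof of Lemma 2.1(ii)): Suppose (u_h, q_h, p_h) together with numerical traces û_h, q̂_h, p̂_h satisfy the semidiscrete DG scheme with zero source. Then for every t ∈ [0,T], (1/2) d/dt Σ_{i=1}^N ∫_{I_i} u_h(x,t)² dx = Σ_{i=1}^N ( ⟦V(u_h)⟧ − {Π f(u_h)} ⟦u_h⟧ + (⟦Π f(u_h)⟧ − ⟦p_h⟧)(û_h − {u_h}) − ⟦u_h⟧(p̂_h − {p_h}) + ε ⟦q_h⟧(q̂_h − {q_h}) )(x_i). -/

import Mathlib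

open Polynomial Set

noncomputable section

namespace DG

/-- A broken polynomial function in `W_h^k` (before imposing the degree bound):
the polynomial indexed by `i` is the restriction of the function to
element `I_i = (x (i-1), x i)`, for `i = 1,…,N`. -/
abbrev Broken := ℕ → Polynomial ℝ

/-- Membership in `W_h^k`: every elementwise polynomial has degree at most `k`. -/
def DegLE (k : ℕ) (P : Broken) : Prop := ∀ i, (P i).natDegree ≤ k

/-- `(F, G) = Σ_{i=1}^N ∫_{I_i} F_i G_i dx` for families of functions on the elements. -/
def ip (x : ℕ → ℝ) (N : ℕ) (F G : ℕ → ℝ → ℝ) : ℝ :=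
  ∑ i ∈ Finset.Icc 1 N, ∫ y in (x (i-1))..(x i), F i y * G i y

/-- the family of real functions determined by a broken polynomial -/
def ev (P : Broken) : ℕ → ℝ → ℝ := fun i y => (P i).eval y

/-- elementwise spatial derivative -/
def dx (P : Broken) : Broken := fun i => (P i).derivative

/-- `⟨φ̂, v n⟩ = Σ_{i=1}^N [φ̂(x_i) v(x_i⁻) - φ̂(x_{i-1}) v(x_{i-1}⁺)]` where `φ̂` is a
numerical trace, i.e. a function on the node indices. -/
def bt (x : ℕ → ℝ) (N : ℕ) (φ : ℕ → ℝ) (v : Broken) : ℝ :=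
  ∑ i ∈ Finset.Icc 1 N, (φ i * (v i).eval (x i) - φ (i - 1) * (v i).eval (x (i - 1)))

/-- the one-sided limit `ζ(x_i⁻)` of a broken polynomial at the node `x_i`, `i = 1,…,N` -/
def lv (x : ℕ → ℝ) (P : Broken) (i : ℕ) : ℝ := (P i).eval (x i)

/-- the one-sided limit `ζ(x_i⁺)` at the node `x_i`, with the periodic identification
`ζ(x_N⁺) = ζ(x_0⁺)` -/
def rv (x : ℕ → ℝ) (N : ℕ) (P : Broken) (i : ℕ) : ℝ :=
  if i = N then (P 1).eval (x 0) else (P (i + 1)).eval (x i)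

/-- the jump `⟦ζ⟧(x_i) = ζ(x_i⁻) - ζ(x_i⁺)` -/
def jmp (x : ℕ → ℝ) (N : ℕ) (P : Broken) (i : ℕ) : ℝ := lv x P i - rv x N P i

/-- the average `{ζ}(x_i) = (ζ(x_i⁻) + ζ(x_i⁺))/2` -/
def avg (x : ℕ → ℝ) (N : ℕ) (P : Broken) (i : ℕ) : ℝ := (lv x P i + rv x N P i) / 2

/-- the jump `⟦g(ζ)⟧(x_i)` of a composition `g ∘ ζ` -/
def jmpC (x : ℕ → ℝ) (N : ℕ) (g : ℝ → ℝ) (P : Broken) (i : ℕ) : ℝ :=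
  g (lv x P i) - g (rv x N P i)

/-- `η(w,v) = Σ_{i=1}^N ⟦w⟧⟦v⟧(x_i)` -/
def eta (x : ℕ → ℝ) (N : ℕ) (w v : Broken) : ℝ :=
  ∑ i ∈ Finset.Icc 1 N, jmp x N w i * jmp x N v i

/-- the mesh `a = x 0 < x 1 < ⋯ < x N = b` -/
structure Mesh (a b : ℝ) (N : ℕ) (x : ℕ → ℝ) : Prop where
  hab : a < b
  hN : 1 ≤ N
  left : x 0 = a
  right : x N = b
  mono : ∀ i, i < N → x i < x (i + 1)

/-- `Pf` is the elementwise L²-projection of the function `y ↦ f(ζ(y))` onto `W_h^k`: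
it has degree at most `k` and `∫_{I_i} (Pf - f(ζ)) w = 0` for every polynomial `w` of
degree at most `k` and every element `i`. -/
def IsProj (x : ℕ → ℝ) (N k : ℕ) (f : ℝ → ℝ) (P Pf : Broken) : Prop :=
  DegLE k Pf ∧ ∀ i ∈ Finset.Icc 1 N, ∀ w : Polynomial ℝ, w.natDegree ≤ k →
    (∫ y in (x (i-1))..(x i), ((Pf i).eval y - f ((P i).eval y)) * w.eval y) = 0

/-- a numerical trace takes equal values at the nodes `x_0` and `x_N` -/
def IsTrace (N : ℕ) (φ : ℕ → ℝ) : Prop := φ 0 = φ N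

/-- The semidiscrete DG scheme with zero source on `[0,T]`: `u q p : ℝ → Broken`
are the approximations (depending differentiably on `t`, with time derivatives
`ut qt pt`), and `uh qh ph` are the (possibly `t`-dependent) numerical traces. -/
structure Scheme (x : ℕ → ℝ) (N k : ℕ) (T ε : ℝ) (f : ℝ → ℝ)
    (u q p ut qt pt : ℝ → Broken) (uh qh ph : ℝ → ℕ → ℝ) : Prop where
  degu : ∀ t ∈ Icc (0:ℝ) T, DegLE k (u t)
  degq : ∀ t ∈ Icc (0:ℝ) T, DegLE k (q t)
  degp : ∀ t ∈ Icc (0:ℝ) T, DegLE k (p t)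
  degut : ∀ t ∈ Icc (0:ℝ) T, DegLE k (ut t)
  trace_u : ∀ t ∈ Icc (0:ℝ) T, IsTrace N (uh t)
  trace_q : ∀ t ∈ Icc (0:ℝ) T, IsTrace N (qh t)
  trace_p : ∀ t ∈ Icc (0:ℝ) T, IsTrace N (ph t)
  du : ∀ t ∈ Icc (0:ℝ) T, ∀ i, ∀ y : ℝ,
    HasDerivWithinAt (fun s => ((u s) i).eval y) (((ut t) i).eval y) (Icc (0:ℝ) T) t
  dq : ∀ t ∈ Icc (0:ℝ) T, ∀ i, ∀ y : ℝ,
    HasDerivWithinAt (fun s => ((q s) i).eval y) (((qt t) i).eval y) (Icc (0:ℝ) T) t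
  dp : ∀ t ∈ Icc (0:ℝ) T, ∀ i, ∀ y : ℝ,
    HasDerivWithinAt (fun s => ((p s) i).eval y) (((pt t) i).eval y) (Icc (0:ℝ) T) t
  eq1 : ∀ t ∈ Icc (0:ℝ) T, ∀ v : Broken, DegLE k v →
    ip x N (ev (q t)) (ev v) + ip x N (ev (u t)) (ev (dx v)) - bt x N (uh t) v = 0
  eq2 : ∀ t ∈ Icc (0:ℝ) T, ∀ z : Broken, DegLE k z →
    ip x N (ev (p t)) (ev z) + ε * ip x N (ev (q t)) (ev (dx z)) - ε * bt x N (qh t) z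
      = ip x N (fun i y => f (((u t) i).eval y)) (ev z)
  eq3 : ∀ t ∈ Icc (0:ℝ) T, ∀ w : Broken, DegLE k w →
    ip x N (ev (ut t)) (ev w) - ip x N (ev (p t)) (ev (dx w)) + bt x N (ph t) w = 0

end DG

/-!
Test the third equation of the scheme with `u_h`, the first with `p_h` and with `Πf(u_h)`, and
the second with `q_h`. Elementwise integration by parts turns `(a, b_x) + (b, a_x)` into
`Σ (⟦a⟧{b} + {a}⟦b⟧)(x_i)`, since with the periodic identifications the boundary terms of
neighbouring elements meet at the same node; against test functions in `W_h^k` the projection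
`Πf(u_h)` may replace `f(u_h)`; and `(f(u_h), ∂ₓu_h) = Σ ⟦V(u_h)⟧(x_i)` by the chain rule.
Eliminating the volume terms between these identities leaves the flux sum.
-/

namespace Polynomial

def nodalBasis (k j : ℕ) : ℝ[X] :=
  Lagrange.basis (Finset.range (k + 1)) (Nat.cast : ℕ → ℝ) j

def nodalMass (k : ℕ) (α β : ℝ) (j l : ℕ) : ℝ :=
  ∫ y in α..β, (nodalBasis k j).eval y * (nodalBasis k l).eval y

theorem eval_eq_sum_nodalBasis {k : ℕ} {P : ℝ[X]} (hP : P.natDegree ≤ k) (y : ℝ) :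
    P.eval y = ∑ j ∈ Finset.range (k + 1), P.eval (j : ℝ) * (nodalBasis k j).eval y := by
  have hdeg : P.degree < (Finset.range (k + 1)).card := by
    rw [Finset.card_range]
    exact degree_le_natDegree.trans_lt (by exact_mod_cast Nat.lt_succ_of_le hP)
  conv_lhs => rw [Lagrange.eq_interpolate Nat.cast_injective.injOn hdeg]
  simp [Lagrange.interpolate_apply, eval_finsetSum, nodalBasis]

theorem integral_eval_mul_eval_eq_sum_nodalMass {k : ℕ} {P Q : ℝ[X]} (hP : P.natDegree ≤ k)
    (hQ : Q.natDegree ≤ k) (α β : ℝ) :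
    ∫ y in α..β, P.eval y * Q.eval y =
      ∑ j ∈ Finset.range (k + 1), ∑ l ∈ Finset.range (k + 1),
        P.eval (j : ℝ) * Q.eval (l : ℝ) * nodalMass k α β j l := by
  have hexpand : ∀ y, P.eval y * Q.eval y =
      ∑ j ∈ Finset.range (k + 1), ∑ l ∈ Finset.range (k + 1), P.eval (j : ℝ) * Q.eval (l : ℝ) *
        ((nodalBasis k j).eval y * (nodalBasis k l).eval y) := by
    intro y
    rw [eval_eq_sum_nodalBasis hP y, eval_eq_sum_nodalBasis hQ y, Finset.sum_mul_sum]
    exact Finset.sum_congr rfl fun j _ => Finset.sum_congr rfl fun l _ => by ring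
  have hcont : ∀ j l : ℕ, Continuous fun y => P.eval (j : ℝ) * Q.eval (l : ℝ) *
      ((nodalBasis k j).eval y * (nodalBasis k l).eval y) := fun j l => by fun_prop
  rw [intervalIntegral.integral_congr fun y _ => hexpand y,
    intervalIntegral.integral_finsetSum fun j _ =>
      (continuous_finsetSum _ fun l _ => hcont j l).intervalIntegrable α β]
  refine Finset.sum_congr rfl fun j _ => ?_
  rw [intervalIntegral.integral_finsetSum fun l _ => (hcont j l).intervalIntegrable α β]
  exact Finset.sum_congr rfl fun l _ => intervalIntegral.integral_const_mul _ _

/-- A pointwise time derivative of polynomial families of bounded degree can be taken under the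
integral: in the nodal basis, `∫ P Q` is a bilinear form in finitely many point values. -/
theorem hasDerivWithinAt_integral_eval_mul {k : ℕ} {s : Set ℝ} {t : ℝ} {P Q : ℝ → ℝ[X]}
    {P' Q' : ℝ[X]} (hP : ∀ τ ∈ s, (P τ).natDegree ≤ k) (hQ : ∀ τ ∈ s, (Q τ).natDegree ≤ k)
    (hP' : P'.natDegree ≤ k) (hQ' : Q'.natDegree ≤ k) (ht : t ∈ s)
    (hPd : ∀ y, HasDerivWithinAt (fun τ => (P τ).eval y) (P'.eval y) s t)
    (hQd : ∀ y, HasDerivWithinAt (fun τ => (Q τ).eval y) (Q'.eval y) s t) (α β : ℝ) :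
    HasDerivWithinAt (fun τ => ∫ y in α..β, (P τ).eval y * (Q τ).eval y)
      ((∫ y in α..β, P'.eval y * (Q t).eval y) + ∫ y in α..β, (P t).eval y * Q'.eval y) s t := by
  have hnodal : HasDerivWithinAt
      (fun τ => ∑ j ∈ Finset.range (k + 1), ∑ l ∈ Finset.range (k + 1),
        (P τ).eval (j : ℝ) * (Q τ).eval (l : ℝ) * nodalMass k α β j l)
      (∑ j ∈ Finset.range (k + 1), ∑ l ∈ Finset.range (k + 1),
        (P'.eval (j : ℝ) * (Q t).eval (l : ℝ) + (P t).eval (j : ℝ) * Q'.eval (l : ℝ)) *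
          nodalMass k α β j l) s t :=
    HasDerivWithinAt.fun_sum fun j _ => HasDerivWithinAt.fun_sum fun l _ =>
      ((hPd j).mul (hQd l)).mul_const _
  rw [integral_eval_mul_eval_eq_sum_nodalMass hP' (hQ t ht),
    integral_eval_mul_eval_eq_sum_nodalMass (hP t ht) hQ', ← Finset.sum_add_distrib]
  simp_rw [← Finset.sum_add_distrib, ← add_mul]
  exact hnodal.congr (fun τ hτ => integral_eval_mul_eval_eq_sum_nodalMass (hP τ hτ) (hQ τ hτ) α β)
    (integral_eval_mul_eval_eq_sum_nodalMass (hP t ht) (hQ t ht) α β)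

end Polynomial

namespace DG

theorem ip_comm (x : ℕ → ℝ) (N : ℕ) (F G : ℕ → ℝ → ℝ) : ip x N F G = ip x N G F := by
  unfold ip
  simp_rw [mul_comm (F _ _)]

theorem sum_Icc_periodic_shift (N : ℕ) (H : ℕ → ℕ → ℝ) :
    ∑ i ∈ Finset.Icc 1 N, H i (i - 1) =
      ∑ i ∈ Finset.Icc 1 N, if i = N then H 1 0 else H (i + 1) i := by
  refine Finset.sum_nbij' (fun i => if i = 1 then N else i - 1)
    (fun i => if i = N then 1 else i + 1) ?_ ?_ ?_ ?_ ?_ <;>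
  · intro i hi
    simp only [Finset.mem_Icc] at hi ⊢
    split_ifs <;> first | omega | (subst_vars; simp) | (congr 1; omega)

variable {x : ℕ → ℝ} {N : ℕ}

theorem bt_eq_sum_mul_jmp {φ : ℕ → ℝ} (hφ : IsTrace N φ) (v : Broken) :
    bt x N φ v = ∑ i ∈ Finset.Icc 1 N, φ i * jmp x N v i := by
  have hleft : ∑ i ∈ Finset.Icc 1 N, φ (i - 1) * (v i).eval (x (i - 1)) =
      ∑ i ∈ Finset.Icc 1 N, φ i * rv x N v i := by
    rw [sum_Icc_periodic_shift N fun j n => φ n * (v j).eval (x n)]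
    refine Finset.sum_congr rfl fun i _ => ?_
    unfold rv
    split_ifs with hi
    · rw [hi, hφ]
    · rfl
  rw [bt, Finset.sum_sub_distrib, hleft, ← Finset.sum_sub_distrib]
  exact Finset.sum_congr rfl fun i _ => by rw [jmp, lv]; ring

theorem ip_dx_add_ip_dx (P Q : Broken) :
    ip x N (ev P) (ev (dx Q)) + ip x N (ev Q) (ev (dx P)) =
      ∑ i ∈ Finset.Icc 1 N, (jmp x N P i * avg x N Q i + avg x N P i * jmp x N Q i) := by
  have hibp : ∀ α β : ℝ, ∀ R S : ℝ[X],
      (∫ y in α..β, R.eval y * S.derivative.eval y) + ∫ y in α..β, S.eval y * R.derivative.eval y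
        = R.eval β * S.eval β - R.eval α * S.eval α := fun α β R S => by
    have h := intervalIntegral.integral_mul_deriv_eq_deriv_mul (fun y _ => R.hasDerivAt y)
      (fun y _ => S.hasDerivAt y) (R.derivative.continuous.intervalIntegrable α β)
      (S.derivative.continuous.intervalIntegrable α β)
    simp only [mul_comm (R.derivative.eval _)] at h
    linarith
  have hleft : ∑ i ∈ Finset.Icc 1 N, (P i).eval (x (i - 1)) * (Q i).eval (x (i - 1)) =
      ∑ i ∈ Finset.Icc 1 N, rv x N P i * rv x N Q i := by
    rw [sum_Icc_periodic_shift N fun j n => (P j).eval (x n) * (Q j).eval (x n)]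
    exact Finset.sum_congr rfl fun i _ => by unfold rv; split_ifs <;> rfl
  simp only [ip, ev, dx, ← Finset.sum_add_distrib, hibp]
  rw [Finset.sum_sub_distrib, hleft, ← Finset.sum_sub_distrib]
  exact Finset.sum_congr rfl fun i _ => by rw [jmp, avg, jmp, avg, lv, lv]; ring

theorem ip_comp_dx {f V : ℝ → ℝ} (hf : Continuous f) (hV : ∀ y, HasDerivAt V (f y) y)
    (P : Broken) :
    ip x N (fun i y => f ((P i).eval y)) (ev (dx P)) = ∑ i ∈ Finset.Icc 1 N, jmpC x N V P i := by
  have hftc : ∀ i, ∫ y in (x (i - 1))..(x i), f ((P i).eval y) * (P i).derivative.eval y =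
      V ((P i).eval (x i)) - V ((P i).eval (x (i - 1))) := fun i =>
    intervalIntegral.integral_eq_sub_of_hasDerivAt
      (fun y _ => (hV ((P i).eval y)).comp y ((P i).hasDerivAt y))
      ((hf.comp (P i).continuous).mul (P i).derivative.continuous |>.intervalIntegrable _ _)
  have hleft : ∑ i ∈ Finset.Icc 1 N, V ((P i).eval (x (i - 1))) =
      ∑ i ∈ Finset.Icc 1 N, V (rv x N P i) := by
    rw [sum_Icc_periodic_shift N fun j n => V ((P j).eval (x n))]
    exact Finset.sum_congr rfl fun i _ => by unfold rv; split_ifs <;> rfl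
  simp only [ip, ev, dx, hftc]
  rw [Finset.sum_sub_distrib, hleft, ← Finset.sum_sub_distrib]
  rfl

theorem ip_comp_eq_ip_proj {k : ℕ} {f : ℝ → ℝ} (hf : Continuous f) {P Pf w : Broken}
    (hproj : IsProj x N k f P Pf) (hw : DegLE k w) :
    ip x N (fun i y => f ((P i).eval y)) (ev w) = ip x N (ev Pf) (ev w) := by
  refine Finset.sum_congr rfl fun i hi => ?_
  have horth := hproj.2 i hi (w i) (hw i)
  have hPf : IntervalIntegrable (fun y => (Pf i).eval y * (w i).eval y) MeasureTheory.volume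
      (x (i - 1)) (x i) := ((Pf i).continuous.mul (w i).continuous).intervalIntegrable _ _
  have hfP : IntervalIntegrable (fun y => f ((P i).eval y) * (w i).eval y) MeasureTheory.volume
      (x (i - 1)) (x i) := ((hf.comp (P i).continuous).mul (w i).continuous).intervalIntegrable _ _
  simp only [sub_mul] at horth
  rw [intervalIntegral.integral_sub hPf hfP, sub_eq_zero] at horth
  exact horth.symm

variable {k : ℕ} {T ε : ℝ} {f : ℝ → ℝ} {u q p ut qt pt : ℝ → Broken} {uh qh ph : ℝ → ℕ → ℝ}
  {t : ℝ}

theorem hasDerivWithinAt_half_sum_integral_sq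
    (hS : Scheme x N k T ε f u q p ut qt pt uh qh ph) (ht : t ∈ Icc (0 : ℝ) T) :
    HasDerivWithinAt
      (fun s => (1 / 2) * ∑ i ∈ Finset.Icc 1 N, ∫ y in (x (i - 1))..(x i), ((u s) i).eval y ^ 2)
      (ip x N (ev (ut t)) (ev (u t))) (Icc (0 : ℝ) T) t := by
  have hderiv := (HasDerivWithinAt.fun_sum (u := Finset.Icc 1 N) fun i _ =>
    hasDerivWithinAt_integral_eval_mul (fun τ hτ => hS.degu τ hτ i) (fun τ hτ => hS.degu τ hτ i)
      (hS.degut t ht i) (hS.degut t ht i) ht (hS.du t ht i) (hS.du t ht i)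
      (x (i - 1)) (x i)).const_mul (1 / 2 : ℝ)
  simp only [← sq] at hderiv
  refine hderiv.congr_deriv ?_
  rw [Finset.mul_sum]
  refine Finset.sum_congr rfl fun i _ => ?_
  simp only [ev, mul_comm ((u t i).eval _)]
  ring

theorem ip_ut_u_eq_sum_fluxes {V : ℝ → ℝ} {Pf : Broken} (hf : Continuous f)
    (hV : ∀ y, HasDerivAt V (f y) y)
    (hS : Scheme x N k T ε f u q p ut qt pt uh qh ph) (hPf : IsProj x N k f (u t) Pf)
    (ht : t ∈ Icc (0 : ℝ) T) :
    ip x N (ev (ut t)) (ev (u t)) =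
      ∑ i ∈ Finset.Icc 1 N,
        (jmpC x N V (u t) i - avg x N Pf i * jmp x N (u t) i
          + (jmp x N Pf i - jmp x N (p t) i) * (uh t i - avg x N (u t) i)
          - jmp x N (u t) i * (ph t i - avg x N (p t) i)
          + ε * jmp x N (q t) i * (qh t i - avg x N (q t) i)) := by
  have hdxu : DegLE k (dx (u t)) := fun i =>
    (natDegree_derivative_le _).trans ((Nat.sub_le _ _).trans (hS.degu t ht i))
  have e3 := hS.eq3 t ht (u t) (hS.degu t ht)
  have e1p := hS.eq1 t ht (p t) (hS.degp t ht)
  have e1Pf := hS.eq1 t ht Pf hPf.1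
  have e2 := hS.eq2 t ht (q t) (hS.degq t ht)
  rw [bt_eq_sum_mul_jmp (hS.trace_p t ht)] at e3
  rw [bt_eq_sum_mul_jmp (hS.trace_u t ht)] at e1p e1Pf
  rw [bt_eq_sum_mul_jmp (hS.trace_q t ht), ip_comp_eq_ip_proj hf hPf (hS.degq t ht)] at e2
  have ibp_pu := ip_dx_add_ip_dx (x := x) (N := N) (p t) (u t)
  have ibp_uPf := ip_dx_add_ip_dx (x := x) (N := N) (u t) Pf
  have ibp_qq := ip_dx_add_ip_dx (x := x) (N := N) (q t) (q t)
  have ftc := ip_comp_dx (x := x) (N := N) hf hV (u t)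
  rw [ip_comp_eq_ip_proj hf hPf hdxu] at ftc
  have comm_pq := ip_comm x N (ev (p t)) (ev (q t))
  have comm_Pfq := ip_comm x N (ev Pf) (ev (q t))
  have hsplit : ∑ i ∈ Finset.Icc 1 N,
        (jmpC x N V (u t) i - avg x N Pf i * jmp x N (u t) i
          + (jmp x N Pf i - jmp x N (p t) i) * (uh t i - avg x N (u t) i)
          - jmp x N (u t) i * (ph t i - avg x N (p t) i)
          + ε * jmp x N (q t) i * (qh t i - avg x N (q t) i)) =
      ∑ i ∈ Finset.Icc 1 N, jmpC x N V (u t) i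
        + ∑ i ∈ Finset.Icc 1 N, uh t i * jmp x N Pf i
        - ∑ i ∈ Finset.Icc 1 N,
            (jmp x N (u t) i * avg x N Pf i + avg x N (u t) i * jmp x N Pf i)
        - ∑ i ∈ Finset.Icc 1 N, uh t i * jmp x N (p t) i
        + ∑ i ∈ Finset.Icc 1 N,
            (jmp x N (p t) i * avg x N (u t) i + avg x N (p t) i * jmp x N (u t) i)
        - ∑ i ∈ Finset.Icc 1 N, ph t i * jmp x N (u t) i
        + ε * ∑ i ∈ Finset.Icc 1 N, qh t i * jmp x N (q t) i
        - ε / 2 * ∑ i ∈ Finset.Icc 1 N,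
            (jmp x N (q t) i * avg x N (q t) i + avg x N (q t) i * jmp x N (q t) i) := by
    simp only [Finset.mul_sum, ← Finset.sum_add_distrib, ← Finset.sum_sub_distrib]
    exact Finset.sum_congr rfl fun i _ => by ring
  rw [hsplit]
  -- (u_t, u) = (p, u_x) - Σ p̂⟦u⟧,  (p, u_x) = Σ [p u] + (q, p) - Σ û⟦p⟧,
  -- (q, p) = (Πf, q) - ε (q, q_x) + ε Σ q̂⟦q⟧,  (Πf, q) = Σ û⟦Πf⟧ - Σ [u Πf] + (Πf, u_x),
  -- (Πf, u_x) = Σ ⟦V(u)⟧,  2 (q, q_x) = Σ [q q],  where [a b] = ⟦a⟧{b} + {a}⟦b⟧.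
  linear_combination e3 + ibp_pu - e1p - comm_pq + e2 - ε / 2 * ibp_qq + comm_Pfq + e1Pf
    - ibp_uPf + ftc

end DG

theorem dg_energy_derivative_identity_general
    (N k : ℕ) (x : ℕ → ℝ)
    (T ε : ℝ) (f V : ℝ → ℝ) (hf : Continuous f)
    (hV : ∀ y : ℝ, HasDerivAt V (f y) y)
    (u q p ut qt pt : ℝ → DG.Broken) (uh qh ph : ℝ → ℕ → ℝ)
    (hS : DG.Scheme x N k T ε f u q p ut qt pt uh qh ph)
    (Pf : ℝ → DG.Broken)
    (hPf : ∀ t ∈ Set.Icc (0:ℝ) T, DG.IsProj x N k f (u t) (Pf t)) :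
    ∀ t ∈ Set.Icc (0:ℝ) T,
      HasDerivWithinAt
        (fun s => (1/2) * ∑ i ∈ Finset.Icc 1 N,
          ∫ y in (x (i-1))..(x i), ((u s) i).eval y ^ 2)
        (∑ i ∈ Finset.Icc 1 N,
          (DG.jmpC x N V (u t) i - DG.avg x N (Pf t) i * DG.jmp x N (u t) i
            + (DG.jmp x N (Pf t) i - DG.jmp x N (p t) i) * (uh t i - DG.avg x N (u t) i)
            - DG.jmp x N (u t) i * (ph t i - DG.avg x N (p t) i)
            + ε * DG.jmp x N (q t) i * (qh t i - DG.avg x N (q t) i)))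
        (Set.Icc (0:ℝ) T) t := fun t ht =>
  (DG.hasDerivWithinAt_half_sum_integral_sq hS ht).congr_deriv
    (DG.ip_ut_u_eq_sum_fluxes hf hV hS (hPf t ht) ht)

/-- Energy-derivative identity (intermediate step in the proof of Lemma 2.1(ii)):
`(1/2) d/dt Σᵢ ∫_{Iᵢ} u_h² = Σᵢ (⟦V(u_h)⟧ - {Πf(u_h)}⟦u_h⟧ + (⟦Πf(u_h)⟧ - ⟦p_h⟧)(û_h - {u_h})
 - ⟦u_h⟧(p̂_h - {p_h}) + ε⟦q_h⟧(q̂_h - {q_h}))(xᵢ)`. -/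
theorem dg_energy_derivative_identity
    (a b : ℝ) (N k : ℕ) (x : ℕ → ℝ) (hmesh : DG.Mesh a b N x)
    (T ε : ℝ) (hT : 0 < T) (f V : ℝ → ℝ) (hf : Continuous f)
    (hV : ∀ y : ℝ, HasDerivAt V (f y) y)
    (u q p ut qt pt : ℝ → DG.Broken) (uh qh ph : ℝ → ℕ → ℝ)
    (hS : DG.Scheme x N k T ε f u q p ut qt pt uh qh ph)
    (Pf : ℝ → DG.Broken)
    (hPf : ∀ t ∈ Set.Icc (0:ℝ) T, DG.IsProj x N k f (u t) (Pf t)) :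
    ∀ t ∈ Set.Icc (0:ℝ) T,
      HasDerivWithinAt
        (fun s => (1/2) * ∑ i ∈ Finset.Icc 1 N,
          ∫ y in (x (i-1))..(x i), ((u s) i).eval y ^ 2)
        (∑ i ∈ Finset.Icc 1 N,
          (DG.jmpC x N V (u t) i - DG.avg x N (Pf t) i * DG.jmp x N (u t) i
            + (DG.jmp x N (Pf t) i - DG.jmp x N (p t) i) * (uh t i - DG.avg x N (u t) i)
            - DG.jmp x N (u t) i * (ph t i - DG.avg x N (p t) i)
            + ε * DG.jmp x N (q t) i * (qh t i - DG.avg x N (q t) i)))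
        (Set.Icc (0:ℝ) T) t :=
  dg_energy_derivative_identity_general N k x T ε f V hf hV u q p ut qt pt uh qh ph hS Pf hPf
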